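/- Let G be a countable discrete group and let Λ be a normal subgroup of G such that the quotient group G/Λ has the Haagerup property. Then the pair (G, Λ) has the Haagerup property from below if and only if G has the Haagerup property. -/

import Mathlib

open scoped ComplexOrder

/-- A function `φ : G → ℂ` is positive definite if for all `g_1, …, g_m ∈ G` and
`c_1, …, c_m ∈ ℂ` the sum `Σ_{i,j} c_i conj(c_j) φ(g_j⁻¹ g_i)` is a nonnegative real number
(equivalently, it is `≥ 0` for the standard partial order on `ℂ`). -/
def IsPositiveDefinite {G : Type*} [Group G] (φ : G → ℂ) : Prop :=
  ∀ (m : ℕ) (g : Fin m → G) (c : Fin m → ℂ),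
    0 ≤ ∑ i : Fin m, ∑ j : Fin m, c i * (starRingEnd ℂ) (c j) * φ ((g j)⁻¹ * g i)

/-- `f` is C0 on a subset `S` if for every `ε > 0` the set of elements of `S` where
`|f| ≥ ε` is finite. -/
def IsC0On {G : Type*} (f : G → ℂ) (S : Set G) : Prop :=
  ∀ ε : ℝ, 0 < ε → {g ∈ S | ε ≤ ‖f g‖}.Finite

/-- A group `G` has the Haagerup property if there is a sequence of C0 positive definite
functions on `G` converging pointwise to `1`. -/
def HasHaagerup (G : Type*) [Group G] : Prop :=
  ∃ φ : ℕ → G → ℂ, (∀ n, IsPositiveDefinite (φ n)) ∧ (∀ n, IsC0On (φ n) Set.univ) ∧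
    ∀ g : G, Filter.Tendsto (fun n => φ n g) Filter.atTop (nhds 1)

/-- The pair `(G, Λ)` has the Haagerup property from below if there is a sequence of positive
definite functions `ψ_n` on `G` with `|1 - ψ_n(g)| → 0` for every `g ∈ G`, each of which is C0
on `Λ`. -/
def HaagerupFromBelow {G : Type*} [Group G] (Λ : Subgroup G) : Prop :=
  ∃ ψ : ℕ → G → ℂ, (∀ n, IsPositiveDefinite (ψ n)) ∧
    (∀ g : G, Filter.Tendsto (fun n => ‖1 - ψ n g‖) Filter.atTop (nhds 0)) ∧
    ∀ n, IsC0On (ψ n) (Λ : Set G)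

/-!
The implication from the Haagerup property of `G` is immediate. Conversely, let `ψₙ` witness the
Haagerup property from below and `ηₙ` the Haagerup property of `G ⧸ Λ`. The products
`ψₙ · (ηₙ ∘ π)` are positive definite by the Schur product theorem and tend to `1`. They are C0
because a positive definite `ψ` that is C0 on `Λ` is C0 on every coset `xΛ`: an infinite subset of
`xΛ` on which `‖ψ‖ ≥ ε` contains, for every `N`, points `x₁, …, x_N` with `‖ψ (xᵢ⁻¹ xⱼ)‖ ≤ δ` for
`i ≠ j` (as `xᵢ⁻¹ xⱼ ∈ Λ`), and the Cauchy–Schwarz inequality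
`‖∑ cᵢ ψ(xᵢ)‖² ≤ ψ(1) · ∑ cᵢ c̄ⱼ ψ(xⱼ⁻¹ xᵢ)` with unimodular `cᵢ` aligning the `ψ(xᵢ)` gives
`N ε² ≤ ψ(1) (ψ(1) + N δ)`, which fails for `δ = ε² / (2 ψ(1))` and `N` large.
-/

open Complex ComplexConjugate

theorem Set.Infinite.exists_finset_pairwise {α : Type*} {T : Set α} (hT : T.Infinite)
    {r : α → α → Prop} (hr : ∀ x y, r x y → r y x) (hfin : ∀ x ∈ T, {y ∈ T | ¬ r x y}.Finite)
    (n : ℕ) : ∃ s : Finset α, s.card = n ∧ ↑s ⊆ T ∧ (s : Set α).Pairwise r := by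
  classical
  induction n with
  | zero => exact ⟨∅, rfl, by simp, by simp⟩
  | succ n ih =>
    obtain ⟨s, hcard, hsT, hs⟩ := ih
    have hbad : ((⋃ x ∈ s, {y ∈ T | ¬ r x y}) ∪ s).Finite :=
      (s.finite_toSet.biUnion fun x hx => hfin x (hsT hx)).union s.finite_toSet
    obtain ⟨y, hyT, hy⟩ := (hT.sdiff hbad).nonempty
    simp only [Set.mem_union, Set.mem_iUnion, Set.mem_ofPred_eq, Finset.mem_coe, not_or,
      not_exists, not_and, not_not] at hy
    refine ⟨insert y s, by rw [Finset.card_insert_of_notMem hy.2, hcard], ?_, ?_⟩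
    · rw [Finset.coe_insert]
      exact Set.insert_subset hyT hsT
    · rw [Finset.coe_insert, Set.pairwise_insert]
      exact ⟨hs, fun x hx _ => ⟨hr _ _ (hy.1 x hx hyT), hy.1 x hx hyT⟩⟩

theorem div_add_one_le_of_le_mul {a b A ε : ℝ} (ha : 0 ≤ a) (haA : a ≤ A) (hb : 0 ≤ b)
    (h : ε ≤ a * b) : ε / (A + 1) ≤ b := by
  rw [div_le_iff₀ (by linarith)]
  nlinarith

theorem IsC0On.mono {G : Type*} {f : G → ℂ} {S T : Set G} (h : IsC0On f T) (hST : S ⊆ T) :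
    IsC0On f S :=
  fun ε hε => (h ε hε).subset fun _ hx => ⟨hST hx.1, hx.2⟩

section KernelMatrix

open Matrix

variable {G : Type*} [Group G] {ψ : G → ℂ}

def kernelMatrix {ι : Type*} (ψ : G → ℂ) (g : ι → G) : Matrix ι ι ℂ :=
  Matrix.of fun i j => ψ ((g i)⁻¹ * g j)

theorem star_dotProduct_kernelMatrix_mulVec {ι : Type*} [Fintype ι] (g : ι → G) (c : ι → ℂ) :
    star c ⬝ᵥ (kernelMatrix ψ g *ᵥ c) = ∑ i, ∑ j, c i * conj (c j) * ψ ((g j)⁻¹ * g i) := by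
  simp only [dotProduct, mulVec, kernelMatrix, of_apply, Finset.mul_sum, Pi.star_apply]
  rw [Finset.sum_comm]
  exact Finset.sum_congr rfl fun i _ => Finset.sum_congr rfl fun j _ => by
    rw [RCLike.star_def]; ring

theorem isPositiveDefinite_of_posSemidef_kernelMatrix
    (h : ∀ m (g : Fin m → G), (kernelMatrix ψ g).PosSemidef) : IsPositiveDefinite ψ :=
  fun m g c => star_dotProduct_kernelMatrix_mulVec (ψ := ψ) g c ▸
    (h m g).dotProduct_mulVec_nonneg c

end KernelMatrix

namespace IsPositiveDefinite

variable {G : Type*} [Group G] {φ ψ : G → ℂ}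

theorem sum_nonneg {ι : Type*} [Fintype ι] (h : IsPositiveDefinite ψ) (g : ι → G) (c : ι → ℂ) :
    0 ≤ ∑ i, ∑ j, c i * conj (c j) * ψ ((g j)⁻¹ * g i) := by
  let e := Fintype.equivFin ι
  convert h _ (g ∘ e.symm) (c ∘ e.symm) using 1
  rw [← e.symm.sum_comp]
  exact Finset.sum_congr rfl fun i _ => (e.symm.sum_comp _).symm

theorem one_nonneg (h : IsPositiveDefinite ψ) : 0 ≤ ψ 1 := by
  simpa using h 1 ![1] ![1]

theorem re_one_nonneg (h : IsPositiveDefinite ψ) : 0 ≤ (ψ 1).re :=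
  (nonneg_iff.mp h.one_nonneg).1

theorem ofReal_re_one (h : IsPositiveDefinite ψ) : ((ψ 1).re : ℂ) = ψ 1 :=
  (eq_re_of_ofReal_le h.one_nonneg).symm

theorem nonneg_two_points (h : IsPositiveDefinite ψ) (g : G) (c : ℂ) :
    0 ≤ (1 + c * conj c) * ψ 1 + c * ψ g + conj c * ψ g⁻¹ := by
  have := h 2 ![1, g] ![1, c]
  simp only [Fin.sum_univ_two] at this
  convert this using 1
  simp only [Fin.isValue, Matrix.cons_val_zero, map_one, mul_one, inv_one, one_mul,
    Matrix.cons_val_one, Matrix.cons_val_fin_one, inv_mul_cancel]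
  ring

theorem map_inv (h : IsPositiveDefinite ψ) (g : G) : ψ g⁻¹ = conj (ψ g) := by
  have h₁ := (nonneg_iff.mp (h.nonneg_two_points g 1)).2
  have h₂ := (nonneg_iff.mp (h.nonneg_two_points g I)).2
  have him : (ψ 1).im = 0 := by rw [← h.ofReal_re_one, ofReal_im]
  simp only [map_one, mul_one, one_mul, add_im, mul_im, add_re, one_re, him, mul_zero, one_im,
    add_zero, zero_mul, zero_add, conj_I, mul_neg, I_mul_I, neg_neg, neg_mul, I_re, I_im,
    neg_im] at h₁ h₂
  exact Complex.ext (by rw [conj_re]; linarith) (by rw [conj_im]; linarith)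

theorem norm_map_inv (h : IsPositiveDefinite ψ) (g : G) : ‖ψ g⁻¹‖ = ‖ψ g‖ := by
  rw [h.map_inv, norm_conj]

open Matrix in
theorem posSemidef_kernelMatrix {ι : Type*} [Fintype ι] (h : IsPositiveDefinite ψ) (g : ι → G) :
    (kernelMatrix ψ g).PosSemidef := by
  refine PosSemidef.of_dotProduct_mulVec_nonneg ?_ fun c => ?_
  · ext i j
    simp [kernelMatrix, ← h.map_inv]
  · rw [star_dotProduct_kernelMatrix_mulVec]
    exact h.sum_nonneg g c

open Matrix in
theorem norm_le (h : IsPositiveDefinite ψ) (g : G) : ‖ψ g‖ ≤ (ψ 1).re := by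
  have hdet := (h.posSemidef_kernelMatrix ![1, g]).det_nonneg
  simp only [kernelMatrix, det_fin_two, of_apply, Fin.isValue, cons_val_zero, cons_val_one,
    cons_val_fin_one, inv_one, mul_one, one_mul, inv_mul_cancel, sub_nonneg] at hdet
  rw [h.map_inv, mul_conj, ← h.ofReal_re_one, normSq_eq_norm_sq, ← ofReal_mul, real_le_real,
    ← sq] at hdet
  exact (pow_le_pow_iff_left₀ (norm_nonneg _) h.re_one_nonneg two_ne_zero).mp hdet

theorem eq_zero_of_re_one_eq_zero (h : IsPositiveDefinite ψ) (h₀ : (ψ 1).re = 0) (g : G) :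
    ψ g = 0 :=
  norm_le_zero_iff.mp (h₀ ▸ h.norm_le g)

theorem norm_sum_sq_le {ι : Type*} [Fintype ι] (h : IsPositiveDefinite ψ) (g : ι → G)
    (c : ι → ℂ) :
    ‖∑ i, c i * ψ (g i)‖ ^ 2 ≤ (ψ 1).re * (∑ i, ∑ j, c i * conj (c j) * ψ ((g j)⁻¹ * g i)).re := by
  set S := ∑ i, c i * ψ (g i)
  set Q := ∑ i, ∑ j, c i * conj (c j) * ψ ((g j)⁻¹ * g i)
  rcases h.re_one_nonneg.eq_or_lt with hP | hP
  · have hS : S = 0 := Finset.sum_eq_zero fun i _ => by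
      rw [h.eq_zero_of_re_one_eq_zero hP.symm, mul_zero]
    simp [hS, ← hP]
  set P := (ψ 1).re
  -- adjoin the identity with the coefficient `d` minimising the resulting quadratic form
  set d : ℂ := -S / P
  have key := h.sum_nonneg (Option.elim · 1 g) (Option.elim · d c)
  simp only [Fintype.sum_option, Option.elim_none, Option.elim_some, inv_one, one_mul, mul_one,
    h.map_inv] at key
  have hdS : d * conj S = ((-normSq S / P : ℝ) : ℂ) := by
    rw [div_mul_eq_mul_div, neg_mul, mul_conj]
    push_cast
    ring
  have hSd : conj d * S = ((-normSq S / P : ℝ) : ℂ) := by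
    rw [← conj_ofReal, ← hdS, map_mul, conj_conj]
  have hdd : d * conj d * ψ 1 = ((normSq S / P : ℝ) : ℂ) := by
    rw [mul_conj, ← h.ofReal_re_one]
    simp only [d, normSq_div, normSq_neg, normSq_ofReal]
    push_cast
    field_simp
    rfl
  have hrow : ∑ i, d * conj (c i) * conj (ψ (g i)) = d * conj S := by
    simp only [S, map_sum, map_mul, Finset.mul_sum, mul_assoc]
  have hcol : ∑ i, (c i * conj d * ψ (g i) + ∑ j, c i * conj (c j) * ψ ((g j)⁻¹ * g i)) =
      conj d * S + Q := by
    rw [Finset.sum_add_distrib, Finset.mul_sum]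
    exact congrArg (· + Q) (Finset.sum_congr rfl fun i _ => by ring)
  rw [hrow, hcol, hdd, hdS, hSd] at key
  have hre := (nonneg_iff.mp key).1
  simp only [add_re, ofReal_re, neg_div] at hre
  rw [← normSq_eq_norm_sq, ← div_le_iff₀' hP]
  linarith

theorem mul (hφ : IsPositiveDefinite φ) (hψ : IsPositiveDefinite ψ) :
    IsPositiveDefinite (φ * ψ) :=
  isPositiveDefinite_of_posSemidef_kernelMatrix fun _ g =>
    (hφ.posSemidef_kernelMatrix g).hadamard (hψ.posSemidef_kernelMatrix g)

theorem comp_monoidHom {H : Type*} [Group H] {η : H → ℂ} (h : IsPositiveDefinite η)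
    (f : G →* H) : IsPositiveDefinite (η ∘ f) := fun m g c => by
  simpa only [Function.comp_apply, map_mul, _root_.map_inv] using h m (f ∘ g) c

theorem sum_sum_norm_le (h : IsPositiveDefinite ψ) {s : Finset G} {δ : ℝ} (hδ : 0 ≤ δ)
    (hsep : (s : Set G).Pairwise fun x y => ‖ψ (x⁻¹ * y)‖ ≤ δ) :
    ∑ x : s, ∑ y : s, ‖ψ ((y : G)⁻¹ * x)‖ ≤ s.card * ((ψ 1).re + s.card * δ) := by
  classical
  have hrow : ∀ x : s, ∑ y : s, ‖ψ ((y : G)⁻¹ * x)‖ ≤ (ψ 1).re + s.card * δ := fun x =>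
    calc ∑ y : s, ‖ψ ((y : G)⁻¹ * x)‖ ≤ ∑ y : s, ((if y = x then (ψ 1).re else 0) + δ) := by
          refine Finset.sum_le_sum fun y _ => ?_
          split_ifs with hyx
          · simpa [hyx] using (h.norm_le 1).trans (le_add_of_nonneg_right hδ)
          · simpa using hsep y.2 x.2 (Subtype.coe_ne_coe.mpr hyx)
      _ = (ψ 1).re + s.card * δ := by simp [Finset.sum_add_distrib]
  calc _ ≤ ∑ _x : s, ((ψ 1).re + s.card * δ) := Finset.sum_le_sum fun x _ => hrow x
    _ = _ := by simp [mul_add]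

theorem card_mul_sq_le (h : IsPositiveDefinite ψ) {s : Finset G} {ε δ : ℝ} (hε : 0 ≤ ε)
    (hδ : 0 ≤ δ) (hlarge : ∀ x ∈ s, ε ≤ ‖ψ x‖)
    (hsep : (s : Set G).Pairwise fun x y => ‖ψ (x⁻¹ * y)‖ ≤ δ) :
    s.card * ε ^ 2 ≤ (ψ 1).re * ((ψ 1).re + s.card * δ) := by
  set P := (ψ 1).re
  set N : ℝ := (s.card : ℝ)
  let c : s → ℂ := fun x => conj (ψ x) / ‖ψ x‖
  have hc : ∀ x, c x * ψ x = ‖ψ x‖ := fun x => by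
    rw [div_mul_eq_mul_div, conj_mul']
    rcases eq_or_ne (‖ψ x‖ : ℂ) 0 with h0 | h0
    · simp [h0]
    · field_simp
  have hc_norm : ∀ x, ‖c x‖ ≤ 1 := fun x => by
    simpa [c] using div_self_le_one ‖ψ x‖
  have hS : N * ε ≤ ‖∑ x : s, c x * ψ x‖ := by
    simp only [hc, ← ofReal_sum, norm_real, Real.norm_eq_abs]
    calc N * ε = ∑ _x : s, ε := by simp [N]
      _ ≤ ∑ x : s, ‖ψ x‖ := Finset.sum_le_sum fun x _ => hlarge x x.2
      _ ≤ _ := le_abs_self _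
  have hQ : (∑ x : s, ∑ y : s, c x * conj (c y) * ψ ((y : G)⁻¹ * x)).re ≤ N * (P + N * δ) :=
    calc _ ≤ ‖∑ x : s, ∑ y : s, c x * conj (c y) * ψ ((y : G)⁻¹ * x)‖ := re_le_norm _
      _ ≤ ∑ x : s, ∑ y : s, ‖ψ ((y : G)⁻¹ * x)‖ := by
          refine (norm_sum_le _ _).trans (Finset.sum_le_sum fun x _ => ?_)
          refine (norm_sum_le _ _).trans (Finset.sum_le_sum fun y _ => ?_)
          rw [norm_mul, norm_mul, norm_conj]
          exact mul_le_of_le_one_left (norm_nonneg _)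
            (mul_le_one₀ (hc_norm x) (norm_nonneg _) (hc_norm y))
      _ ≤ N * (P + N * δ) := h.sum_sum_norm_le hδ hsep
  have hcs : (N * ε) ^ 2 ≤ P * (N * (P + N * δ)) :=
    calc (N * ε) ^ 2 ≤ ‖∑ x : s, c x * ψ x‖ ^ 2 := pow_le_pow_left₀ (by positivity) hS 2
      _ ≤ P * _ := h.norm_sum_sq_le Subtype.val c
      _ ≤ P * (N * (P + N * δ)) := mul_le_mul_of_nonneg_left hQ h.re_one_nonneg
  rcases (show (0 : ℝ) ≤ N from Nat.cast_nonneg _).eq_or_lt with hN | hN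
  · rw [← hN]
    simpa using mul_nonneg h.re_one_nonneg h.re_one_nonneg
  · nlinarith

theorem isC0On_fiber {Λ : Subgroup G} (h : IsPositiveDefinite ψ) (hΛ : IsC0On ψ Λ)
    (q : G ⧸ Λ) : IsC0On ψ (QuotientGroup.mk ⁻¹' {q}) := by
  intro ε hε
  set T := {y ∈ QuotientGroup.mk ⁻¹' {q} | ε ≤ ‖ψ y‖}
  refine Set.not_infinite.mp fun hT => ?_
  set P := (ψ 1).re
  obtain ⟨x₀, hx₀⟩ := hT.nonempty
  have hP : 0 < P := hε.trans_le (hx₀.2.trans (h.norm_le x₀))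
  set δ := ε ^ 2 / (2 * P)
  have hδ : 0 < δ := by positivity
  have hnear : ∀ x ∈ T, {y ∈ T | ¬ ‖ψ (x⁻¹ * y)‖ ≤ δ}.Finite := fun x hx =>
    ((hΛ δ hδ).preimage (mul_right_injective x⁻¹).injOn).subset fun y hy =>
      ⟨QuotientGroup.eq.mp ((hx.1 : (x : G ⧸ Λ) = q).trans (hy.1.1 : (y : G ⧸ Λ) = q).symm),
        (not_le.mp hy.2).le⟩
  have hsymm : ∀ x y : G, ‖ψ (x⁻¹ * y)‖ ≤ δ → ‖ψ (y⁻¹ * x)‖ ≤ δ := fun x y hxy => by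
    rwa [← h.norm_map_inv, mul_inv_rev, inv_inv]
  obtain ⟨N, hN⟩ := exists_nat_gt (2 * P ^ 2 / ε ^ 2)
  obtain ⟨s, rfl, hsT, hsep⟩ := hT.exists_finset_pairwise hsymm hnear N
  have hbound := h.card_mul_sq_le hε.le hδ.le (fun x hx => (hsT hx).2) hsep
  have hδP : P * δ = ε ^ 2 / 2 := by simp only [δ]; field_simp
  rw [div_lt_iff₀ (by positivity)] at hN
  nlinarith

theorem isC0On_mul_comp_mk {Λ : Subgroup G} {η : G ⧸ Λ → ℂ} {B : ℝ} (h : IsPositiveDefinite ψ)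
    (hΛ : IsC0On ψ Λ) (hηB : ∀ q, ‖η q‖ ≤ B) (hη : IsC0On η Set.univ) :
    IsC0On (fun g => ψ g * η g) Set.univ := by
  intro ε hε
  have hB : 0 ≤ B := (norm_nonneg _).trans (hηB (1 : G))
  -- the `+ 1` keeps both thresholds positive when `ψ 1 = 0` or `B = 0`
  refine ((hη (ε / ((ψ 1).re + 1)) (div_pos hε (by linarith [h.re_one_nonneg]))).biUnion
    fun q _ => h.isC0On_fiber hΛ q (ε / (B + 1)) (div_pos hε (by linarith))).subset ?_
  rintro y ⟨-, hy⟩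
  rw [norm_mul] at hy
  refine Set.mem_biUnion (x := (y : G ⧸ Λ)) ⟨trivial, ?_⟩ ⟨rfl, ?_⟩
  · exact div_add_one_le_of_le_mul (norm_nonneg _) (h.norm_le y) (norm_nonneg _) hy
  · exact div_add_one_le_of_le_mul (norm_nonneg _) (hηB _) (norm_nonneg _)
      (mul_comm ‖ψ y‖ _ ▸ hy)

end IsPositiveDefinite

theorem HaagerupFromBelow.hasHaagerup {G : Type*} [Group G] {Λ : Subgroup G} [Λ.Normal]
    (hΛ : HaagerupFromBelow Λ) (hquot : HasHaagerup (G ⧸ Λ)) : HasHaagerup G := by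
  obtain ⟨ψ, hψ, hψ_tendsto, hψΛ⟩ := hΛ
  obtain ⟨η, hη, hη_c0, hη_tendsto⟩ := hquot
  refine ⟨fun n => ψ n * (η n ∘ QuotientGroup.mk' Λ),
    fun n => (hψ n).mul ((hη n).comp_monoidHom _),
    fun n => (hψ n).isC0On_mul_comp_mk (hψΛ n) (hη n).norm_le (hη_c0 n), fun g => ?_⟩
  have hψg : Filter.Tendsto (fun n => ψ n g) Filter.atTop (nhds 1) :=
    tendsto_iff_norm_sub_tendsto_zero.mpr (by simpa only [norm_sub_rev] using hψ_tendsto g)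
  simpa using hψg.mul (hη_tendsto g)

theorem HasHaagerup.haagerupFromBelow {G : Type*} [Group G] (h : HasHaagerup G)
    (Λ : Subgroup G) : HaagerupFromBelow Λ := by
  obtain ⟨φ, hφ, hφ_c0, hφ_tendsto⟩ := h
  refine ⟨φ, hφ, fun g => ?_, fun n => (hφ_c0 n).mono (Set.subset_univ _)⟩
  simpa only [norm_sub_rev] using tendsto_iff_norm_sub_tendsto_zero.mp (hφ_tendsto g)

theorem haagerupFromBelow_iff_haagerup_of_quotient_general
    (G : Type*) [Group G] (Λ : Subgroup G) [Λ.Normal]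
    (hquot : HasHaagerup (G ⧸ Λ)) :
    HaagerupFromBelow Λ ↔ HasHaagerup G :=
  ⟨fun h => h.hasHaagerup hquot, fun h => h.haagerupFromBelow Λ⟩

/-- If `Λ` is a normal subgroup of a countable discrete group `G` such that
`G/Λ` has the Haagerup property, then `(G, Λ)` has the Haagerup property from below if and only
if `G` has the Haagerup property. -/
theorem haagerupFromBelow_iff_haagerup_of_quotient
    (G : Type*) [Group G] [Countable G] (Λ : Subgroup G) [Λ.Normal]
    (hquot : HasHaagerup (G ⧸ Λ)) :
    HaagerupFromBelow Λ ↔ HasHaagerup G :=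
  haagerupFromBelow_iff_haagerup_of_quotient_general G Λ hquot
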